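/- For X_α, X_β ∈ F₀, defining J(X_α, X_β) = inf_{f₁,f₂∈G}(‖X_α∘f₁ - X_β‖_E + ‖X_α - X_β∘f₂‖_E), one has ‖X_α - X_β‖_{L^∞} ≤ 4 ‖X_α∘f - X_β‖_{L^∞} for every f ∈ G; consequently ‖X_α - X_β‖_{L^∞} ≤ 2 J(X_α, X_β). -/

import Mathlib

open MeasureTheory

/-- A triple of Lagrangian coordinates. -/
structure LagCoord where
  y : ℝ → ℝ
  U : ℝ → ℝ
  H : ℝ → ℝ

/-- `X ∈ F₀`: Lagrangian coordinates in `E = V × H¹ × V` with `y_ξ, H_ξ ≥ 0`,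
`y_ξ + H_ξ = 1` and `y_ξ H_ξ = y_ξ² U² + U_ξ²` a.e., `H(-∞) = 0`, and the
normalization `y + H = id`. -/
def InF0 (X : LagCoord) : Prop :=
  (∃ K : NNReal, LipschitzWith K X.y) ∧ (∃ K : NNReal, LipschitzWith K X.U) ∧
  (∃ K : NNReal, LipschitzWith K X.H) ∧
  (∃ C : ℝ, ∀ x, |X.y x - x| ≤ C) ∧ (∃ C : ℝ, ∀ x, |X.H x| ≤ C) ∧
  MemLp (fun x => deriv X.y x - 1) 2 (volume : Measure ℝ) ∧
  MemLp (deriv X.H) 2 (volume : Measure ℝ) ∧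
  MemLp X.U 2 (volume : Measure ℝ) ∧
  MemLp (deriv X.U) 2 (volume : Measure ℝ) ∧
  (∀ᵐ ξ ∂(volume : Measure ℝ),
    0 ≤ deriv X.y ξ ∧ 0 ≤ deriv X.H ξ ∧ deriv X.y ξ + deriv X.H ξ = 1 ∧
    deriv X.y ξ * deriv X.H ξ =
      (deriv X.y ξ) ^ 2 * (X.U ξ) ^ 2 + (deriv X.U ξ) ^ 2) ∧
  Filter.Tendsto X.H Filter.atBot (nhds 0) ∧
  (∀ ξ, X.y ξ + X.H ξ = ξ)

/-- Relabeling: `X∘f = (y∘f, U∘f, H∘f)`. -/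
def comp (X : LagCoord) (f : ℝ → ℝ) : LagCoord :=
  ⟨X.y ∘ f, X.U ∘ f, X.H ∘ f⟩

/-- `f ∈ G`: the relabeling group. -/
def InG (f : ℝ ≃ₜ ℝ) : Prop :=
  ((∃ C : ℝ, ∀ x, |f x - x| ≤ C) ∧ ∃ K : NNReal, LipschitzWith K (fun x => f x - x)) ∧
  ((∃ C : ℝ, ∀ x, |f.symm x - x| ≤ C) ∧
    ∃ K : NNReal, LipschitzWith K (fun x => f.symm x - x)) ∧
  MemLp (fun x => deriv (⇑f) x - 1) 2 (volume : Measure ℝ)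

/-- The `L^∞` norm of the difference of two Lagrangian triples:
`‖X_α - X_β‖_{L^∞} = ‖y_α - y_β‖_∞ + ‖U_α - U_β‖_∞ + ‖H_α - H_β‖_∞`. -/
noncomputable def LinfDiff (A B : LagCoord) : ℝ :=
  (⨆ x : ℝ, |A.y x - B.y x|) + (⨆ x : ℝ, |A.U x - B.U x|) +
    (⨆ x : ℝ, |A.H x - B.H x|)

/-- The `V`-norm `‖g‖_V = ‖g‖_{L^∞} + ‖g'‖_{L²}`. -/
noncomputable def Vnorm (g : ℝ → ℝ) : ℝ :=
  (⨆ x : ℝ, |g x|) + (∫ x : ℝ, (deriv g x) ^ 2) ^ (1/2 : ℝ)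

/-- The `H¹`-norm. -/
noncomputable def H1norm (g : ℝ → ℝ) : ℝ :=
  (∫ x : ℝ, ((g x) ^ 2 + (deriv g x) ^ 2)) ^ (1/2 : ℝ)

/-- The `E`-norm of the difference `X_α - X_β` (the `ζ` components differ by
`y_α - y_β`). -/
noncomputable def EDiff (A B : LagCoord) : ℝ :=
  Vnorm (fun x => A.y x - B.y x) + H1norm (fun x => A.U x - B.U x) +
    Vnorm (fun x => A.H x - B.H x)

/-- `J(X_α,X_β) = inf_{f₁,f₂ ∈ G} (‖X_α∘f₁ - X_β‖_E + ‖X_α - X_β∘f₂‖_E)`. -/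
noncomputable def Jdist (A B : LagCoord) : ℝ :=
  sInf {r : ℝ | ∃ f₁ f₂ : ℝ ≃ₜ ℝ, InG f₁ ∧ InG f₂ ∧
    r = EDiff (comp A ⇑f₁) B + EDiff A (comp B ⇑f₂)}

/-!
Since `y + H = id` on `F₀`, a relabeling is read off the two triples:
`f - id = (y_α∘f - y_β) + (H_α∘f - H_β)`, so `‖f - id‖_∞ ≤ ‖X_α∘f - X_β‖_∞`. The components
of `X_α` are `1`-Lipschitz (their derivatives are bounded by `1` a.e.), so each component of
`X_α - X_β` exceeds the corresponding one of `X_α∘f - X_β` by at most `‖f - id‖_∞`; summing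
gives the factor `4`. Applying this to both terms of `J` gives the factor `2`, once the `L^∞`
norm is known to be dominated by the `E` norm: for the `U` component this is the
one-dimensional Sobolev inequality `u(x)² ≤ ‖u‖²_{H¹}`, which applies to `U_α∘f` because `f`
is bi-Lipschitz and so preserves `H¹`.
-/

open Set Function
open scoped NNReal ENNReal

theorem MeasureTheory.Integrable.exists_le_norm_lt {E : Type*} [NormedAddCommGroup E]
    {f : ℝ → E} (hf : Integrable f) (x : ℝ) {ε : ℝ} (hε : 0 < ε) : ∃ t ≤ x, ‖f t‖ < ε := by
  by_contra! h
  have hlt := (hf.measure_norm_ge_lt_top hε).trans_le' (measure_mono fun t ht => h t ht)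
  exact hlt.ne Real.volume_Iic

namespace LipschitzWith

variable {K : ℝ≥0} {g : ℝ → ℝ}

theorem integral_deriv_eq_sub (hg : LipschitzWith K g) (a b : ℝ) :
    ∫ x in a..b, deriv g x = g b - g a :=
  hg.lipschitzOnWith.absolutelyContinuousOnInterval.integral_deriv_eq_sub

theorem of_ae_abs_deriv_le (hg : LipschitzWith K g) {c : ℝ≥0}
    (hd : ∀ᵐ x, |deriv g x| ≤ c) : LipschitzWith c g := by
  refine LipschitzWith.of_dist_le_mul fun s t => ?_
  have h := intervalIntegral.norm_integral_le_of_norm_le_const_ae (a := t) (b := s)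
    (f := deriv g) (hd.mono fun x hx _ => hx)
  rwa [hg.integral_deriv_eq_sub, Real.norm_eq_abs, ← Real.dist_eq, ← Real.dist_eq] at h

theorem sq_le_integral_sq_add_deriv_sq (hg : LipschitzWith K g) (h2 : MemLp g 2)
    (hd2 : MemLp (deriv g) 2) (x : ℝ) : g x ^ 2 ≤ ∫ t, (g t ^ 2 + deriv g t ^ 2) := by
  -- `g x ^ 2 - g t ^ 2 = ∫ₜˣ 2 g g'`, and `g t ^ 2` is arbitrarily small for some `t ≤ x`
  set T := ∫ t, (g t ^ 2 + deriv g t ^ 2)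
  have hT : Integrable fun t => g t ^ 2 + deriv g t ^ 2 := h2.integrable_sq.add hd2.integrable_sq
  have hprod : Integrable fun t => deriv g t * g t + g t * deriv g t := by
    refine hT.mono' ((measurable_deriv g).mul hg.continuous.measurable |>.add
      (hg.continuous.measurable.mul (measurable_deriv g))).aestronglyMeasurable
      (ae_of_all _ fun t => ?_)
    rw [Real.norm_eq_abs, abs_le]
    constructor <;> nlinarith [sq_nonneg (g t - deriv g t), sq_nonneg (g t + deriv g t)]
  have hstep : ∀ t ≤ x, g x ^ 2 ≤ g t ^ 2 + T := by
    intro t htx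
    have hac := (hg.lipschitzOnWith (s := uIcc t x)).absolutelyContinuousOnInterval
    have hsq := hac.integral_deriv_mul_eq_sub hac
    have hle : ∫ s in t..x, (deriv g s * g s + g s * deriv g s) ≤ T := by
      rw [intervalIntegral.integral_of_le htx]
      calc _ ≤ ∫ s in Ioc t x, (g s ^ 2 + deriv g s ^ 2) :=
            setIntegral_mono hprod.integrableOn hT.integrableOn fun s => by
              nlinarith [sq_nonneg (g s - deriv g s)]
        _ ≤ T := setIntegral_le_integral hT (ae_of_all _ fun s => by positivity)
    nlinarith
  refine le_of_forall_pos_lt_add fun ε hε => ?_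
  obtain ⟨t, htx, ht⟩ := h2.integrable_sq.exists_le_norm_lt x hε
  rw [Real.norm_of_nonneg (sq_nonneg _)] at ht
  linarith [hstep t htx]

end LipschitzWith

section LipschitzLeftInverse

variable {K L : ℝ≥0} {f g : ℝ → ℝ}

theorem map_volume_le_smul_of_lipschitz_leftInverse (hf : Measurable f) (hgf : LeftInverse g f)
    (hg : LipschitzWith K g) : volume.map f ≤ (K : ℝ≥0∞) • volume := by
  refine Measure.le_iff.2 fun s hs => ?_
  rw [Measure.map_apply hf hs, Measure.smul_apply, smul_eq_mul]
  calc volume (f ⁻¹' s) ≤ volume (g '' s) := measure_mono fun x hx => ⟨f x, hx, hgf x⟩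
    _ ≤ K * volume s := by
      simpa only [hausdorffMeasure_real, ENNReal.rpow_one] using
        hg.hausdorffMeasure_image_le zero_le_one s

theorem quasiMeasurePreserving_of_lipschitz_leftInverse (hf : Measurable f)
    (hgf : LeftInverse g f) (hg : LipschitzWith K g) :
    Measure.QuasiMeasurePreserving f volume volume :=
  ⟨hf, Measure.absolutelyContinuous_of_le_smul
    (map_volume_le_smul_of_lipschitz_leftInverse hf hgf hg)⟩

theorem MeasureTheory.MemLp.comp_of_lipschitz_leftInverse {E : Type*} [NormedAddCommGroup E]
    {p : ℝ≥0∞} {u : ℝ → E} (hu : MemLp u p) (hf : Measurable f) (hgf : LeftInverse g f)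
    (hg : LipschitzWith K g) : MemLp (u ∘ f) p :=
  ((hu.smul_measure ENNReal.coe_ne_top).mono_measure
    (map_volume_le_smul_of_lipschitz_leftInverse hf hgf hg)).comp_of_map hf.aemeasurable

theorem memLp_deriv_comp_of_lipschitz_leftInverse {K' : ℝ≥0} {p : ℝ≥0∞} {u : ℝ → ℝ}
    (hu : LipschitzWith L u) (hu' : MemLp (deriv u) p) (hf : LipschitzWith K f)
    (hgf : LeftInverse g f) (hg : LipschitzWith K' g) : MemLp (deriv (u ∘ f)) p := by
  have hfm := hf.continuous.measurable
  refine (hu'.comp_of_lipschitz_leftInverse hfm hgf hg).of_le_mul (c := K)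
    (measurable_deriv _).aestronglyMeasurable ?_
  filter_upwards [hf.ae_differentiableAt_real,
    (quasiMeasurePreserving_of_lipschitz_leftInverse hfm hgf hg).ae
      hu.ae_differentiableAt_real] with x hfx hux
  rw [(hux.hasDerivAt.comp x hfx.hasDerivAt).deriv, norm_mul, mul_comm]
  exact mul_le_mul_of_nonneg_right (norm_deriv_le_of_lipschitz hf) (norm_nonneg _)

end LipschitzLeftInverse

structure LipschitzH1 (u : ℝ → ℝ) : Prop where
  lipschitzWith : ∃ K, LipschitzWith K u
  memLp : MemLp u 2
  memLp_deriv : MemLp (deriv u) 2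

namespace LipschitzH1

variable {u v : ℝ → ℝ}

theorem sub (hu : LipschitzH1 u) (hv : LipschitzH1 v) : LipschitzH1 fun x => u x - v x := by
  obtain ⟨K, hK⟩ := hu.lipschitzWith
  obtain ⟨L, hL⟩ := hv.lipschitzWith
  refine ⟨⟨K + L, hK.sub hL⟩, hu.memLp.sub hv.memLp,
    (hu.memLp_deriv.sub hv.memLp_deriv).ae_eq ?_⟩
  filter_upwards [hK.ae_differentiableAt_real, hL.ae_differentiableAt_real] with x hux hvx
  exact (deriv_sub hux hvx).symm

theorem comp_of_lipschitz_leftInverse {K K' : ℝ≥0} {f g : ℝ → ℝ} (hu : LipschitzH1 u)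
    (hf : LipschitzWith K f) (hgf : LeftInverse g f) (hg : LipschitzWith K' g) :
    LipschitzH1 (u ∘ f) := by
  obtain ⟨L, hL⟩ := hu.lipschitzWith
  exact ⟨⟨L * K, hL.comp hf⟩,
    hu.memLp.comp_of_lipschitz_leftInverse hf.continuous.measurable hgf hg,
    memLp_deriv_comp_of_lipschitz_leftInverse hL hu.memLp_deriv hf hgf hg⟩

theorem abs_le_H1norm (hu : LipschitzH1 u) (x : ℝ) : |u x| ≤ H1norm u := by
  obtain ⟨K, hK⟩ := hu.lipschitzWith
  rw [H1norm, ← Real.sqrt_eq_rpow]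
  exact Real.abs_le_sqrt (hK.sq_le_integral_sq_add_deriv_sq hu.memLp hu.memLp_deriv x)

end LipschitzH1

namespace InG

variable {f : ℝ ≃ₜ ℝ}

theorem exists_lipschitzWith (hf : InG f) : ∃ K, LipschitzWith K f := by
  obtain ⟨⟨-, K, hK⟩, -, -⟩ := hf
  exact ⟨K + 1, by simpa using hK.add LipschitzWith.id⟩

theorem exists_lipschitzWith_symm (hf : InG f) : ∃ K, LipschitzWith K f.symm := by
  obtain ⟨-, ⟨-, K, hK⟩, -⟩ := hf
  exact ⟨K + 1, by simpa using hK.add LipschitzWith.id⟩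

theorem refl : InG (Homeomorph.refl ℝ) := by
  simpa [InG, LipschitzWith.const'] using ⟨0, le_rfl⟩

end InG

theorem LipschitzH1.comp_of_inG {u : ℝ → ℝ} {f : ℝ ≃ₜ ℝ} (hu : LipschitzH1 u) (hf : InG f) :
    LipschitzH1 (u ∘ f) := by
  obtain ⟨K, hK⟩ := hf.exists_lipschitzWith
  obtain ⟨K', hK'⟩ := hf.exists_lipschitzWith_symm
  exact hu.comp_of_lipschitz_leftInverse hK f.symm_apply_apply hK'

namespace InF0

variable {X : LagCoord}

theorem ae_abs_deriv_le_one (hX : InF0 X) :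
    ∀ᵐ ξ, |deriv X.y ξ| ≤ 1 ∧ |deriv X.U ξ| ≤ 1 ∧ |deriv X.H ξ| ≤ 1 := by
  obtain ⟨-, -, -, -, -, -, -, -, -, hae, -, -⟩ := hX
  filter_upwards [hae] with ξ ⟨hy, hH, hsum, henergy⟩
  refine ⟨abs_le.2 ⟨by linarith, by linarith⟩, (sq_le_one_iff_abs_le_one _).1 ?_,
    abs_le.2 ⟨by linarith, by linarith⟩⟩
  nlinarith [sq_nonneg (deriv X.y ξ * X.U ξ), sq_nonneg (deriv X.y ξ - deriv X.H ξ)]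

theorem lipschitzWith_y (hX : InF0 X) : LipschitzWith 1 X.y := by
  obtain ⟨K, hK⟩ := hX.1
  exact hK.of_ae_abs_deriv_le (by simpa using hX.ae_abs_deriv_le_one.mono fun _ h => h.1)

theorem lipschitzWith_U (hX : InF0 X) : LipschitzWith 1 X.U := by
  obtain ⟨K, hK⟩ := hX.2.1
  exact hK.of_ae_abs_deriv_le (by simpa using hX.ae_abs_deriv_le_one.mono fun _ h => h.2.1)

theorem lipschitzWith_H (hX : InF0 X) : LipschitzWith 1 X.H := by
  obtain ⟨K, hK⟩ := hX.2.2.1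
  exact hK.of_ae_abs_deriv_le (by simpa using hX.ae_abs_deriv_le_one.mono fun _ h => h.2.2)

theorem lipschitzH1_U (hX : InF0 X) : LipschitzH1 X.U := by
  have hlip := hX.lipschitzWith_U
  obtain ⟨-, -, -, -, -, -, -, hU, hU', -⟩ := hX
  exact ⟨⟨1, hlip⟩, hU, hU'⟩

end InF0

theorem ciSup_abs_sub_le_add_ciSup_comp {φ ψ g : ℝ → ℝ} (hφ : LipschitzWith 1 φ) {δ : ℝ}
    (hg : ∀ x, |g x - x| ≤ δ) (hb : BddAbove (range fun x => |φ (g x) - ψ x|)) :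
    ⨆ x, |φ x - ψ x| ≤ δ + ⨆ x, |φ (g x) - ψ x| := by
  refine ciSup_le fun x => (abs_sub_le _ (φ (g x)) _).trans (add_le_add ?_ (le_ciSup hb x))
  have h := hφ.dist_le_mul x (g x)
  rw [NNReal.coe_one, one_mul, Real.dist_eq, Real.dist_eq, abs_sub_comm x] at h
  exact h.trans (hg x)

theorem linfDiff_le_four_mul_linfDiff_comp {A B : LagCoord} {g : ℝ → ℝ}
    (hAy : LipschitzWith 1 A.y) (hAU : LipschitzWith 1 A.U) (hAH : LipschitzWith 1 A.H)
    (hA : ∀ ξ, A.y ξ + A.H ξ = ξ) (hB : ∀ ξ, B.y ξ + B.H ξ = ξ)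
    (hby : BddAbove (range fun x => |A.y (g x) - B.y x|))
    (hbU : BddAbove (range fun x => |A.U (g x) - B.U x|))
    (hbH : BddAbove (range fun x => |A.H (g x) - B.H x|)) :
    LinfDiff A B ≤ 4 * LinfDiff (comp A g) B := by
  set Sy := ⨆ x, |A.y (g x) - B.y x|
  set SU := ⨆ x, |A.U (g x) - B.U x|
  set SH := ⨆ x, |A.H (g x) - B.H x|
  have hSy : 0 ≤ Sy := Real.iSup_nonneg fun _ => abs_nonneg _
  have hSU : 0 ≤ SU := Real.iSup_nonneg fun _ => abs_nonneg _
  have hSH : 0 ≤ SH := Real.iSup_nonneg fun _ => abs_nonneg _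
  have hg : ∀ x, |g x - x| ≤ Sy + SH := fun x => by
    calc |g x - x| = |(A.y (g x) - B.y x) + (A.H (g x) - B.H x)| := by
          congr 1; linarith [hA (g x), hB x]
      _ ≤ Sy + SH := (abs_add_le _ _).trans (add_le_add (le_ciSup hby x) (le_ciSup hbH x))
  have hy := ciSup_abs_sub_le_add_ciSup_comp hAy hg hby
  have hU := ciSup_abs_sub_le_add_ciSup_comp hAU hg hbU
  have hH := ciSup_abs_sub_le_add_ciSup_comp hAH hg hbH
  change _ ≤ 4 * (Sy + SU + SH)
  unfold LinfDiff
  linarith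

theorem InF0.linfDiff_le_four_mul_linfDiff_comp {A B : LagCoord} {f : ℝ ≃ₜ ℝ} (hA : InF0 A)
    (hB : InF0 B) (hf : InG f) : LinfDiff A B ≤ 4 * LinfDiff (comp A f) B := by
  have hAU := hA.lipschitzH1_U
  have hBU := hB.lipschitzH1_U
  obtain ⟨-, -, -, ⟨CAy, hCAy⟩, ⟨CAH, hCAH⟩, -, -, -, -, -, -, hAid⟩ := id hA
  obtain ⟨-, -, -, ⟨CBy, hCBy⟩, ⟨CBH, hCBH⟩, -, -, -, -, -, -, hBid⟩ := hB
  obtain ⟨⟨⟨Cf, hCf⟩, -⟩, -, -⟩ := hf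
  refine _root_.linfDiff_le_four_mul_linfDiff_comp hA.lipschitzWith_y hA.lipschitzWith_U
    hA.lipschitzWith_H hAid hBid ⟨CAy + (Cf + CBy), ?_⟩ ⟨H1norm A.U + H1norm B.U, ?_⟩
    ⟨CAH + CBH, ?_⟩ <;> rintro _ ⟨x, rfl⟩
  · calc |A.y (f x) - B.y x| ≤ |A.y (f x) - f x| + (|f x - x| + |x - B.y x|) :=
          (abs_sub_le _ (f x) _).trans (add_le_add_right (abs_sub_le _ x _) _)
      _ ≤ CAy + (Cf + CBy) := by
          gcongr
          exacts [hCAy _, hCf x, abs_sub_comm x (B.y x) ▸ hCBy x]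
  · exact (abs_sub _ _).trans (add_le_add (hAU.abs_le_H1norm _) (hBU.abs_le_H1norm x))
  · exact (abs_sub _ _).trans (add_le_add (hCAH _) (hCBH x))

theorem linfDiff_comm (P Q : LagCoord) : LinfDiff P Q = LinfDiff Q P := by
  simp only [LinfDiff, abs_sub_comm]

theorem iSup_abs_le_Vnorm (u : ℝ → ℝ) : ⨆ x, |u x| ≤ Vnorm u :=
  le_add_of_nonneg_right (Real.rpow_nonneg (integral_nonneg fun _ => sq_nonneg _) _)

theorem linfDiff_le_eDiff {P Q : LagCoord} (hU : LipschitzH1 fun x => P.U x - Q.U x) :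
    LinfDiff P Q ≤ EDiff P Q :=
  add_le_add (add_le_add (iSup_abs_le_Vnorm _) (ciSup_le hU.abs_le_H1norm))
    (iSup_abs_le_Vnorm _)

/-- For `X_α, X_β ∈ F₀`: `‖X_α - X_β‖_{L^∞} ≤ 4 ‖X_α∘f - X_β‖_{L^∞}` for every
`f ∈ G`, and consequently `‖X_α - X_β‖_{L^∞} ≤ 2 J(X_α,X_β)`. -/
theorem stmt11 (A B : LagCoord) (hA : InF0 A) (hB : InF0 B) :
    (∀ f : ℝ ≃ₜ ℝ, InG f →
      LinfDiff A B ≤ 4 * LinfDiff (comp A ⇑f) B) ∧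
    LinfDiff A B ≤ 2 * Jdist A B := by
  have hleft : ∀ f : ℝ ≃ₜ ℝ, InG f → LinfDiff A B ≤ 4 * LinfDiff (comp A f) B :=
    fun f hf => hA.linfDiff_le_four_mul_linfDiff_comp hB hf
  have hright : ∀ f : ℝ ≃ₜ ℝ, InG f → LinfDiff A B ≤ 4 * LinfDiff A (comp B f) := by
    intro f hf
    rw [linfDiff_comm, linfDiff_comm A]
    exact hB.linfDiff_le_four_mul_linfDiff_comp hA hf
  refine ⟨hleft, ?_⟩
  have hJ : LinfDiff A B / 2 ≤ Jdist A B := by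
    refine le_csInf ⟨_, _, _, InG.refl, InG.refl, rfl⟩ ?_
    rintro _ ⟨f₁, f₂, hf₁, hf₂, rfl⟩
    have h₁ := linfDiff_le_eDiff (P := comp A f₁) (Q := B)
      ((hA.lipschitzH1_U.comp_of_inG hf₁).sub hB.lipschitzH1_U)
    have h₂ := linfDiff_le_eDiff (P := A) (Q := comp B f₂)
      (hA.lipschitzH1_U.sub (hB.lipschitzH1_U.comp_of_inG hf₂))
    linarith [hleft f₁ hf₁, hright f₂ hf₂]
  linarith
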